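/- arXiv:1208.4150 — 5 statements merged into one kernel-verified Lean document; each statement's English description precedes it below -/
import Mathlib

section
/- A set of real numbers satisfies the DCC (contains no infinite strictly decreasing sequence) if and only if its topological closure satisfies the DCC. -/
/-- A set `S` satisfies the DCC if it contains no infinite strictly decreasing
sequence. -/
def HasDCC (S : Set ℝ) : Prop := ¬ ∃ f : ℕ → ℝ, (∀ n, f n ∈ S) ∧ StrictAnti f

/-- Each open interval `(f (2n+2), f (2n))` contains the point `f (2n+1)` of `closure s`, hence
a point `g n` of `s`; these interlace with the even terms of `f`. -/
theorem StrictAnti.exists_strictAnti_of_forall_mem_closure {α : Type*} [LinearOrder α]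
    [TopologicalSpace α] [OrderTopology α] {s : Set α} {f : ℕ → α} (hf : StrictAnti f)
    (hfs : ∀ n, f n ∈ closure s) : ∃ g : ℕ → α, (∀ n, g n ∈ s) ∧ StrictAnti g := by
  have hmeet : ∀ n, ∃ y ∈ Set.Ioo (f (2 * n + 2)) (f (2 * n)), y ∈ s := fun n =>
    mem_closure_iff.mp (hfs (2 * n + 1)) _ isOpen_Ioo
      ⟨hf (by omega), hf (by omega)⟩
  choose g hg hgs using hmeet
  refine ⟨g, hgs, strictAnti_nat_of_succ_lt fun n => ?_⟩
  calc g (n + 1) < f (2 * (n + 1)) := (hg (n + 1)).2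
    _ = f (2 * n + 2) := by ring_nf
    _ < g n := (hg n).1

theorem dcc_iff_closure_dcc_general (S : Set ℝ) :
    HasDCC S ↔ HasDCC (closure S) := by
  constructor
  · rintro hS ⟨f, hfS, hf⟩
    exact hS (hf.exists_strictAnti_of_forall_mem_closure hfS)
  · rintro hS ⟨f, hfS, hf⟩
    exact hS ⟨f, fun n => subset_closure (hfS n), hf⟩

/-- A set `S ⊆ [0,1]` satisfies the DCC iff its closure satisfies the DCC. -/
theorem dcc_iff_closure_dcc (S : Set ℝ) (hS : S ⊆ Set.Icc 0 1) :
    HasDCC S ↔ HasDCC (closure S) :=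
  dcc_iff_closure_dcc_general S
end

section
/- For I ⊆ [0,1], define I_+ = {0} ∪ { j ∈ [0,1] : j is a finite sum of elements of I } and D(I) = { a ≤ 1 : a = (m-1+f)/m for some positive integer m and f ∈ I_+ }. Then D(D(I)) = D(I) ∪ {1}. -/
/-- `I_+` is `{0}` together with all finite sums of elements of `I`
lying in `[0,1]`. -/
def Iplus (I : Set ℝ) : Set ℝ :=
  {0} ∪ { j : ℝ | j ∈ Set.Icc (0:ℝ) 1 ∧
    ∃ l : List ℝ, l ≠ [] ∧ (∀ x ∈ l, x ∈ I) ∧ l.sum = j }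

/-- `D(I) = { a ≤ 1 : a = (m-1+f)/m, m ∈ ℕ_{≥1}, f ∈ I_+ }`. -/
def DSet (I : Set ℝ) : Set ℝ :=
  { a : ℝ | a ≤ 1 ∧ ∃ m : ℕ, 1 ≤ m ∧ ∃ f ∈ Iplus I, a = ((m : ℝ) - 1 + f) / m }

lemma Iplus_zero (I : Set ℝ) : (0:ℝ) ∈ Iplus I := Or.inl rfl

lemma Iplus_bounds {I : Set ℝ} {f : ℝ} (hf : f ∈ Iplus I) : 0 ≤ f ∧ f ≤ 1 := by
  rcases hf with hf | ⟨⟨h0, h1⟩, _⟩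
  · simp only [Set.mem_singleton_iff] at hf
    simp [hf]
  · exact ⟨h0, h1⟩

lemma Iplus_add {I : Set ℝ} {f g : ℝ} (hf : f ∈ Iplus I) (hg : g ∈ Iplus I)
    (h : f + g ≤ 1) : f + g ∈ Iplus I := by
  have hf0 := (Iplus_bounds hf).1
  have hg0 := (Iplus_bounds hg).1
  rcases hf with hf | ⟨hf1, l1, hl1, hm1, hs1⟩
  · simp only [Set.mem_singleton_iff] at hf
    simpa [hf] using hg
  rcases hg with hg | ⟨hg1, l2, hl2, hm2, hs2⟩
  · simp only [Set.mem_singleton_iff] at hg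
    subst hg
    rw [add_zero]
    exact Or.inr ⟨hf1, l1, hl1, hm1, hs1⟩
  · refine Or.inr ⟨⟨add_nonneg hf0 hg0, h⟩, l1 ++ l2, ?_, ?_, ?_⟩
    · simp [hl1]
    · intro x hx
      rcases List.mem_append.1 hx with hx | hx
      · exact hm1 x hx
      · exact hm2 x hx
    · simp [hs1, hs2]

lemma Iplus_smul {I : Set ℝ} (k : ℕ) {f g : ℝ} (hf : f ∈ Iplus I) (hg : g ∈ Iplus I)
    (h : g + k * f ≤ 1) : g + k * f ∈ Iplus I := by
  induction k generalizing g with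
  | zero => simpa using hg
  | succ n ih =>
    have hf0 := (Iplus_bounds hf).1
    have hgf : g + f ≤ 1 := by
      have : (0:ℝ) ≤ n * f := by positivity
      push_cast at h
      nlinarith
    have hmem : g + f ∈ Iplus I := Iplus_add hg hf hgf
    have := ih hmem (by push_cast at h ⊢; nlinarith)
    have heq : g + f + n * f = g + (n + 1 : ℕ) * f := by push_cast; ring
    rwa [heq] at this

lemma DSet_nonneg {I : Set ℝ} {a : ℝ} (ha : a ∈ DSet I) : 0 ≤ a := by
  obtain ⟨ha1, m, hm, f, hf, rfl⟩ := ha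
  have hm' : (1:ℝ) ≤ m := by exact_mod_cast hm
  have hf0 := (Iplus_bounds hf).1
  apply div_nonneg <;> linarith

/-- combining an `Iplus` element with a `DSet` element. -/
lemma DSet_add_Iplus {I : Set ℝ} {a b : ℝ} (ha : a ∈ Iplus I) (hb : b ∈ DSet I)
    (hab : a + b ≤ 1) : a + b ∈ DSet I := by
  obtain ⟨hb1, n, hn, g, hg, rfl⟩ := hb
  have hn' : (1:ℝ) ≤ n := by exact_mod_cast hn
  have hn0 : (0:ℝ) < n := by linarith
  refine ⟨hab, n, hn, g + n * a, ?_, ?_⟩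
  · apply Iplus_smul n ha hg
    have hdiv : (((n:ℝ) - 1 + g) / n) * n = (n:ℝ) - 1 + g := by field_simp
    nlinarith [mul_le_mul_of_nonneg_right hab (le_of_lt hn0), hdiv]
  · field_simp
    ring

lemma DSet_pair {I : Set ℝ} {a b : ℝ} (ha : a ∈ DSet I) (hb : b ∈ DSet I)
    (hab : a + b ≤ 1) : a + b ∈ DSet I ∪ {1} := by
  obtain ⟨ha1, m, hm, f, hf, rfl⟩ := ha
  obtain ⟨hb1, n, hn, g, hg, rfl⟩ := hb
  have hm' : (1:ℝ) ≤ m := by exact_mod_cast hm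
  have hn' : (1:ℝ) ≤ n := by exact_mod_cast hn
  have hf0 := (Iplus_bounds hf).1
  have hg0 := (Iplus_bounds hg).1
  rcases Nat.lt_or_ge m 2 with h2 | h2
  · -- m = 1
    have : m = 1 := le_antisymm (by omega) hm
    subst this
    have : (((1:ℕ):ℝ) - 1 + f) / ((1:ℕ):ℝ) = f := by norm_num
    rw [this] at hab ⊢
    exact Or.inl (DSet_add_Iplus hf ⟨hb1, n, hn, g, hg, rfl⟩ hab)
  rcases Nat.lt_or_ge n 2 with h2' | h2'
  · -- n = 1
    have : n = 1 := le_antisymm (by omega) hn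
    subst this
    have : (((1:ℕ):ℝ) - 1 + g) / ((1:ℕ):ℝ) = g := by norm_num
    rw [this] at hab ⊢
    rw [add_comm] at hab ⊢
    exact Or.inl (DSet_add_Iplus hg ⟨ha1, m, hm, f, hf, rfl⟩ hab)
  · -- m, n ≥ 2 : the sum must be 1
    right
    have hm2 : (2:ℝ) ≤ m := by exact_mod_cast h2
    have hn2 : (2:ℝ) ≤ n := by exact_mod_cast h2'
    have hm0 : (0:ℝ) < m := by linarith
    have hn0 : (0:ℝ) < n := by linarith
    have h1 : (1:ℝ)/2 ≤ ((m:ℝ) - 1 + f) / m := by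
      rw [le_div_iff₀ hm0]; nlinarith
    have h2 : (1:ℝ)/2 ≤ ((n:ℝ) - 1 + g) / n := by
      rw [le_div_iff₀ hn0]; nlinarith
    have : ((m:ℝ) - 1 + f) / m + ((n:ℝ) - 1 + g) / n = 1 := le_antisymm hab (by linarith)
    simpa using this

lemma DSet_list {I : Set ℝ} (L : List ℝ) (hL : ∀ x ∈ L, x ∈ DSet I)
    (hs : L.sum ≤ 1) : L.sum ∈ DSet I ∪ {1} := by
  induction L with
  | nil =>
    left
    exact ⟨by norm_num, 1, le_refl 1, 0, Iplus_zero I, by norm_num⟩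
  | cons a t ih =>
    have ha : a ∈ DSet I := hL a (by simp)
    have ha0 : 0 ≤ a := DSet_nonneg ha
    have ht0 : 0 ≤ t.sum := List.sum_nonneg (fun x hx => DSet_nonneg (hL x (by simp [hx])))
    simp only [List.sum_cons] at hs ⊢
    have hts : t.sum ≤ 1 := by linarith
    rcases ih (fun x hx => hL x (by simp [hx])) hts with hmem | h1
    · exact DSet_pair ha hmem hs
    · simp only [Set.mem_singleton_iff] at h1
      rw [h1] at hs ⊢
      have : a = 0 := le_antisymm (by linarith) ha0
      right
      simp [this]

lemma Iplus_DSet {I : Set ℝ} {g : ℝ} (hg : g ∈ Iplus (DSet I)) :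
    g ∈ DSet I ∪ {1} := by
  rcases hg with hg | ⟨hg1, l, hl, hm, hs⟩
  · simp only [Set.mem_singleton_iff] at hg
    subst hg
    exact Or.inl ⟨by norm_num, 1, le_refl 1, 0, Iplus_zero I, by norm_num⟩
  · subst hs
    exact DSet_list l hm hg1.2

/-- For `I ⊆ [0,1]`, one has `D(D(I)) = D(I) ∪ {1}`. -/
theorem DSet_DSet (I : Set ℝ) (hI : I ⊆ Set.Icc 0 1) :
    DSet (DSet I) = DSet I ∪ {1} := by
  ext a
  constructor
  · rintro ⟨ha1, n, hn, g, hg, rfl⟩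
    have hn' : (1:ℝ) ≤ n := by exact_mod_cast hn
    have hn0 : (0:ℝ) < n := by linarith
    rcases Iplus_DSet hg with ⟨hg1, m, hm, f, hf, rfl⟩ | h1
    · left
      have hm' : (1:ℝ) ≤ m := by exact_mod_cast hm
      have hm0 : (0:ℝ) < m := by linarith
      refine ⟨ha1, n * m, Nat.one_le_iff_ne_zero.2 (by positivity), f, hf, ?_⟩
      push_cast
      field_simp
      ring
    · simp only [Set.mem_singleton_iff] at h1
      subst h1
      right
      have : ((n:ℝ) - 1 + 1) / n = 1 := by
        rw [sub_add_cancel, div_self (ne_of_gt hn0)]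
      simp only [Set.mem_singleton_iff]
      exact this
  · -- reverse inclusion
    have hsub : Iplus I ⊆ Iplus (DSet I) := by
      intro f hf
      rcases hf with hf | ⟨hf1, l, hl, hm, hs⟩
      · exact Or.inl hf
      · refine Or.inr ⟨hf1, l, hl, ?_, hs⟩
        intro x hx
        have hxI := hI (hm x hx)
        refine ⟨hxI.2, 1, le_refl 1, x, Or.inr ⟨hxI, [x], by simp, by simpa using hm x hx, by simp⟩, by norm_num⟩
    rintro (⟨ha1, m, hm, f, hf, rfl⟩ | h1)
    · exact ⟨ha1, m, hm, f, hsub hf, rfl⟩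
    · simp only [Set.mem_singleton_iff] at h1
      subst h1
      have hhalf : (1:ℝ)/2 ∈ DSet I :=
        ⟨by norm_num, 2, by norm_num, 0, Iplus_zero I, by norm_num⟩
      have h1mem : (1:ℝ) ∈ Iplus (DSet I) := by
        refine Or.inr ⟨by norm_num, [1/2, 1/2], by simp, ?_, by norm_num⟩
        intro x hx
        simp at hx
        rw [hx]; simpa using hhalf
      exact ⟨le_refl 1, 1, le_refl 1, 1, h1mem, by norm_num⟩
end

section
/- For I ⊆ [0,1], the set I satisfies the DCC if and only if D(I) satisfies the DCC, where D(I) = { (m-1+f)/m ≤ 1 : m a positive integer, f ∈ I_+ } and I_+ = {0} ∪ {finite sums of elements of I lying in [0,1]}. -/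
open Set

lemma hasDCC_iff_isPWO (S : Set ℝ) : HasDCC S ↔ S.IsPWO := by
  rw [isPWO_iff_isWF, isWF_iff_no_descending_seq, HasDCC]
  exact ⟨fun h f hf hmem => h ⟨f, hmem, hf⟩, fun h ⟨f, hmem, hf⟩ => h f hf hmem⟩

section Iplus

variable {I : Set ℝ}

lemma Iplus_subset_Icc : Iplus I ⊆ Icc 0 1 := by
  rintro j (rfl | ⟨hj, -⟩)
  · exact ⟨le_rfl, zero_le_one⟩
  · exact hj

lemma Iplus_subset_addSubmonoidClosure : Iplus I ⊆ AddSubmonoid.closure I := by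
  rintro j (rfl | ⟨-, l, -, hl, rfl⟩)
  · exact zero_mem _
  · exact AddSubmonoid.list_sum_mem _ fun x hx => AddSubmonoid.subset_closure (hl x hx)

lemma isPWO_Iplus (h0 : ∀ x ∈ I, 0 ≤ x) (hI : I.IsPWO) : (Iplus I).IsPWO :=
  (hI.addSubmonoid_closure h0).mono Iplus_subset_addSubmonoidClosure

end Iplus

noncomputable def dMap (p : ℕ × ℝ) : ℝ := ((p.1 : ℝ) - 1 + p.2) / p.1

lemma dMap_eq_one_sub {m : ℕ} (hm : 1 ≤ m) (f : ℝ) : dMap (m, f) = 1 - (1 - f) / m := by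
  have : (m : ℝ) ≠ 0 := by positivity
  simp only [dMap]
  field_simp
  ring

lemma monotoneOn_dMap : MonotoneOn dMap (Ici 1 ×ˢ Icc 0 1) := by
  rintro ⟨m, f⟩ ⟨hm, -, hf⟩ ⟨m', f'⟩ ⟨hm', -⟩ ⟨hmm' : m ≤ m', hff' : f ≤ f'⟩
  rw [dMap_eq_one_sub hm, dMap_eq_one_sub hm']
  calc 1 - (1 - f) / m ≤ 1 - (1 - f) / m' := by
        have : (0 : ℝ) < m := by exact_mod_cast hm
        gcongr
    _ ≤ 1 - (1 - f') / m' := by gcongr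

lemma DSet_subset_image_dMap (I : Set ℝ) : DSet I ⊆ dMap '' (Ici 1 ×ˢ Iplus I) := by
  rintro a ⟨-, m, hm, f, hf, rfl⟩
  exact ⟨(m, f), ⟨hm, hf⟩, rfl⟩

lemma isPWO_DSet {I : Set ℝ} (h : (Iplus I).IsPWO) : (DSet I).IsPWO := by
  refine IsPWO.mono ?_ (DSet_subset_image_dMap I)
  refine ((IsPWO.of_linearOrder _).prod h).image_of_monotoneOn ?_
  exact monotoneOn_dMap.mono (prod_mono le_rfl Iplus_subset_Icc)

lemma subset_DSet {I : Set ℝ} (hI : I ⊆ Icc 0 1) : I ⊆ DSet I := by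
  intro x hx
  refine ⟨(hI hx).2, 1, le_rfl, x, Or.inr ⟨hI hx, [x], by simp, by simpa using hx, by simp⟩, ?_⟩
  norm_num

/-- For `I ⊆ [0,1]`, the set `I` satisfies the DCC iff `D(I)` satisfies the DCC. -/
theorem dcc_iff_DSet_dcc (I : Set ℝ) (hI : I ⊆ Set.Icc 0 1) :
    HasDCC I ↔ HasDCC (DSet I) := by
  rw [hasDCC_iff_isPWO, hasDCC_iff_isPWO]
  exact ⟨fun h => isPWO_DSet (isPWO_Iplus (fun x hx => (hI hx).1) h),
    fun h => h.mono (subset_DSet hI)⟩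
end

section
/- If I ⊆ [0,1] satisfies the DCC then I_+ = {0} ∪ { sums of finitely many elements of I that lie in [0,1] } also satisfies the DCC. -/
/-! `I_+` lies in the additive monoid generated by `I`. By Higman's lemma the monoid generated
by a partially well-ordered set of nonnegative elements is again partially well-ordered
(`Set.IsPWO.addSubmonoid_closure`), and in `ℝ` being partially well-ordered, being well-founded
and satisfying the DCC all agree. -/

lemma hasDCC_iff_isWF (S : Set ℝ) : HasDCC S ↔ S.IsWF := by
  rw [Set.isWF_iff_no_descending_seq]
  exact ⟨fun H f hf hS => H ⟨f, hS, hf⟩, fun H ⟨f, hS, hf⟩ => H f hf hS⟩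

lemma Iplus_subset_addSubmonoid_closure (I : Set ℝ) :
    Iplus I ⊆ (AddSubmonoid.closure I : Set ℝ) := by
  rintro j (rfl | ⟨-, l, -, hl, rfl⟩)
  · exact zero_mem _
  · exact list_sum_mem fun x hx => AddSubmonoid.subset_closure (hl x hx)

/-- If `I ⊆ [0,1]` satisfies the DCC, then so does `I_+`. -/
theorem Iplus_dcc (I : Set ℝ) (hI : I ⊆ Set.Icc 0 1) (h : HasDCC I) :
    HasDCC (Iplus I) := by
  rw [hasDCC_iff_isWF] at h ⊢
  have hclosure : (AddSubmonoid.closure I : Set ℝ).IsWF :=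
    (h.isPWO.addSubmonoid_closure fun x hx => (hI hx).1).isWF
  exact hclosure.mono (Iplus_subset_addSubmonoid_closure I)
end

section
/- The set { (p+q+r)^2/(pqr) : p, q, r positive integers } is dense in the positive real numbers. -/
/-!
Take `p = q = n` and `r = ⌈x n²⌉`. Then `(2n + r)² / (n² r) = 4/r + 4/n + r/n²`; as `n → ∞`
the first two terms vanish and `r / n² → x`.
-/

open Filter Topology

noncomputable def anticanonicalVolume (p q r : ℕ) : ℝ :=
  ((p : ℝ) + q + r) ^ 2 / ((p : ℝ) * q * r)

lemma anticanonicalVolume_self_self {n r : ℕ} (hn : n ≠ 0) (hr : r ≠ 0) :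
    anticanonicalVolume n n r = 4 / n + 4 / r + r / n ^ 2 := by
  unfold anticanonicalVolume
  field_simp
  ring

lemma tendsto_nat_ceil_mul_sq_div_sq {x : ℝ} (hx : 0 ≤ x) :
    Tendsto (fun n : ℕ ↦ (⌈x * (n : ℝ) ^ 2⌉₊ : ℝ) / (n : ℝ) ^ 2) atTop (𝓝 x) :=
  (tendsto_nat_ceil_mul_div_atTop hx).comp
    ((tendsto_pow_atTop two_ne_zero).comp tendsto_natCast_atTop_atTop)

lemma tendsto_nat_ceil_mul_sq_atTop {x : ℝ} (hx : 0 < x) :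
    Tendsto (fun n : ℕ ↦ (⌈x * (n : ℝ) ^ 2⌉₊ : ℝ)) atTop atTop :=
  tendsto_natCast_atTop_atTop.comp <| tendsto_nat_ceil_atTop.comp <|
    ((tendsto_pow_atTop two_ne_zero).comp tendsto_natCast_atTop_atTop).const_mul_atTop hx

lemma tendsto_anticanonicalVolume_self_self_ceil {x : ℝ} (hx : 0 < x) :
    Tendsto (fun n : ℕ ↦ anticanonicalVolume n n ⌈x * (n : ℝ) ^ 2⌉₊) atTop (𝓝 x) := by
  have hlim : Tendsto (fun n : ℕ ↦ 4 / (n : ℝ) + 4 / (⌈x * (n : ℝ) ^ 2⌉₊ : ℝ)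
      + (⌈x * (n : ℝ) ^ 2⌉₊ : ℝ) / (n : ℝ) ^ 2) atTop (𝓝 (0 + 0 + x)) :=
    ((tendsto_const_div_atTop_nhds_zero_nat 4).add
      (tendsto_const_nhds.div_atTop (tendsto_nat_ceil_mul_sq_atTop hx))).add
      (tendsto_nat_ceil_mul_sq_div_sq hx.le)
  rw [zero_add, zero_add] at hlim
  refine hlim.congr' ?_
  filter_upwards [eventually_gt_atTop 0] with n hn
  exact (anticanonicalVolume_self_self hn.ne' (Nat.ceil_pos.2 (by positivity)).ne').symm

/-- The set `{ (p+q+r)^2/(pqr) : p, q, r positive integers }` is dense in the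
positive real numbers. -/
theorem dense_volumes :
    ∀ x ∈ Set.Ioi (0:ℝ), x ∈ closure
      { v : ℝ | ∃ p q r : ℕ, 0 < p ∧ 0 < q ∧ 0 < r ∧
        v = ((p : ℝ) + q + r) ^ 2 / ((p : ℝ) * q * r) } := by
  intro x (hx : 0 < x)
  apply mem_closure_of_tendsto (tendsto_anticanonicalVolume_self_self_ceil hx)
  filter_upwards [eventually_gt_atTop 0] with n hn
  exact ⟨n, n, _, hn, hn, Nat.ceil_pos.2 (by positivity), rfl⟩
end
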